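/- arXiv:2204.03022 — 3 statements merged into one kernel-verified Lean document; each statement's English description precedes it below -/
import Mathlib

section
/- Under relational composition on X one has (U·P)²·U² = P·(U·P)²·U²·P and U²·(P·U)² = P·U²·(P·U)²·P, where squares denote repeated relational composition. -/
namespace CubeDance

/-- The set `X` of the 12 major triads, 12 minor triads, and 4 augmented triads. -/
inductive Triad : Type
  | maj : ZMod 12 → Triad
  | min : ZMod 12 → Triad
  | aug : ZMod 4 → Triad
  deriving DecidableEq

/-- Binary relations on `X`. -/
abbrev RelM : Type := Triad → Triad → Prop

/-- Binary relations on `X` form a monoid under relational composition,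
with identity the diagonal relation. -/
instance : Monoid RelM where
  mul R S := fun p q => ∃ r, R p r ∧ S r q
  one := fun p q => p = q
  mul_assoc R S T := by
    funext p q
    apply propext
    constructor
    · rintro ⟨r, ⟨s, h1, h2⟩, h3⟩
      exact ⟨s, h1, r, h2, h3⟩
    · rintro ⟨s, h1, r, h2, h3⟩
      exact ⟨r, ⟨s, h1, h2⟩, h3⟩
  one_mul R := by
    funext p q
    apply propext
    constructor
    · rintro ⟨r, rfl, h⟩
      exact h
    · intro h
      exact ⟨p, rfl, h⟩
  mul_one R := by
    funext p q
    apply propext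
    constructor
    · rintro ⟨r, h, rfl⟩
      exact h
    · intro h
      exact ⟨q, h, rfl⟩

/-- The relation `U`, relating `a_aug` with `x_M` whenever `x ≡ a (mod 4)` and
`a_aug` with `x_m` whenever `x ≡ a + 1 (mod 4)`. -/
def U : RelM := fun p q =>
  match p, q with
  | .aug a, .maj x => (x.val : ZMod 4) = a
  | .maj x, .aug a => (x.val : ZMod 4) = a
  | .aug a, .min x => (x.val : ZMod 4) = a + 1
  | .min x, .aug a => (x.val : ZMod 4) = a + 1
  | _, _ => False

/-- The relation `P`, relating `x_M` with `x_m`, and each augmented triad with itself. -/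
def P : RelM := fun p q =>
  match p, q with
  | .maj x, .min y => x = y
  | .min x, .maj y => x = y
  | .aug a, .aug b => a = b
  | _, _ => False

/-- The relation `L`, relating `x_M` with `(x+4)_m`, and each augmented triad with itself. -/
def L : RelM := fun p q =>
  match p, q with
  | .maj x, .min y => y = x + 4
  | .min y, .maj x => y = x + 4
  | .aug a, .aug b => a = b
  | _, _ => False

/-- The monoid `M_{U,P,L}` generated by the relations `U`, `P` and `L`. -/
def M : Submonoid RelM := Submonoid.closure {U, P, L}

lemma U_mem : U ∈ M := Submonoid.subset_closure (Set.mem_insert _ _)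

lemma P_mem : P ∈ M :=
  Submonoid.subset_closure (Set.mem_insert_of_mem _ (Set.mem_insert _ _))

lemma L_mem : L ∈ M :=
  Submonoid.subset_closure (Set.mem_insert_of_mem _ (Set.mem_insert_of_mem _ rfl))

/-! Write `t.augIndex` for the index of the augmented triad that `U` links `t` to (for `aug a`,
`a` itself), so that `U` relates exactly an augmented and a non-augmented triad with the same
index. `P` fixes the augmented triads and moves the index of every other triad by `±1`.
Chasing a walk `U P U P U U` shows that `(U·P)²·U²` relates exactly two triads that are both
augmented or both not, with indices differing by an odd amount. Since `P` shifts the indices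
of two such triads by amounts of equal parity, conjugating by the involution `P` fixes this
relation. The second identity is the transpose of the first, as `U` and `P` are symmetric. -/

lemma mul_apply (R S : RelM) (p q : Triad) : (R * S) p q ↔ ∃ r, R p r ∧ S r q := Iff.rfl

lemma flip_mul (R S : RelM) : flip (R * S) = flip S * flip R :=
  Relation.flip_comp

lemma flip_sq (R : RelM) : flip (R ^ 2) = flip R ^ 2 := by
  rw [pow_two, pow_two, flip_mul]

namespace Triad

def isAug : Triad → Bool
  | aug _ => true
  | _ => false

def augIndex : Triad → ZMod 4
  | maj x => x.val
  | min x => x.val - 1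
  | aug a => a

def parallel : Triad → Triad
  | maj x => min x
  | min x => maj x
  | aug a => aug a

@[simp] lemma parallel_parallel (t : Triad) : t.parallel.parallel = t := by
  cases t <;> rfl

lemma parallel_involutive : Function.Involutive parallel := parallel_parallel

@[simp] lemma isAug_parallel (t : Triad) : t.parallel.isAug = t.isAug := by
  cases t <;> rfl

lemma augIndex_parallel_of_isAug {t : Triad} (ht : t.isAug) :
    t.parallel.augIndex = t.augIndex := by
  cases t <;> simp_all [isAug, parallel]

lemma odd_augIndex_parallel_sub {t : Triad} (ht : t.isAug = false) :
    Odd (t.parallel.augIndex - t.augIndex) := by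
  cases t <;> simp_all [isAug, parallel, augIndex]

lemma exists_val_cast_eq (k : ZMod 4) : ∃ x : ZMod 12, (x.val : ZMod 4) = k := by
  revert k; decide

lemma exists_isAug_augIndex (b : Bool) (k : ZMod 4) :
    ∃ t : Triad, t.isAug = b ∧ t.augIndex = k := by
  obtain ⟨x, hx⟩ := exists_val_cast_eq k
  cases b
  · exact ⟨maj x, rfl, hx⟩
  · exact ⟨aug k, rfl, rfl⟩

lemma exists_augIndex_parallel_eq_add {d : ZMod 4} (hd : Odd d) (k : ZMod 4) :
    ∃ t : Triad, t.isAug = false ∧ t.augIndex = k ∧ t.parallel.augIndex = k + d := by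
  have hd' : d = 1 ∨ d = -1 := by revert d; unfold Odd; decide
  rcases hd' with rfl | rfl
  · obtain ⟨x, hx⟩ := exists_val_cast_eq (k + 1)
    exact ⟨min x, rfl, by simp [augIndex, hx], by simp [parallel, augIndex, hx]⟩
  · obtain ⟨x, hx⟩ := exists_val_cast_eq k
    exact ⟨maj x, rfl, hx, by simp [parallel, augIndex, hx, sub_eq_add_neg]⟩

end Triad

open Triad

lemma U_iff (p q : Triad) : U p q ↔ p.isAug ≠ q.isAug ∧ p.augIndex = q.augIndex := by
  cases p <;> cases q <;> simp [U, isAug, augIndex, eq_sub_iff_add_eq, eq_comm]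

lemma P_iff (p q : Triad) : P p q ↔ q = p.parallel := by
  cases p <;> cases q <;> simp [P, parallel, eq_comm]

lemma flip_U : flip U = U := by
  funext p q
  simp only [flip, U_iff, ne_comm, eq_comm]

lemma flip_P : flip P = P := by
  funext p q
  apply propext
  rw [flip, P_iff, P_iff, eq_comm, parallel_involutive.eq_iff]

lemma P_mul_apply (R : RelM) (p q : Triad) : (P * R) p q ↔ R p.parallel q := by
  simp [mul_apply, P_iff]

lemma mul_P_apply (R : RelM) (p q : Triad) : (R * P) p q ↔ R p q.parallel := by
  simp [mul_apply, P_iff, ← parallel_involutive.eq_iff]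

lemma P_mul_mul_P_of_forall {R : RelM} (hR : ∀ p q, R p.parallel q.parallel ↔ R p q) :
    P * R * P = R := by
  funext p q
  simp only [mul_P_apply, P_mul_apply, hR]

lemma U_sq_apply (p q : Triad) :
    (U ^ 2) p q ↔ p.isAug = q.isAug ∧ p.augIndex = q.augIndex := by
  simp only [pow_two, mul_apply, U_iff]
  constructor
  · rintro ⟨r, ⟨hpr, hpr'⟩, hrq, hrq'⟩
    refine ⟨?_, hpr'.trans hrq'⟩
    rw [Bool.eq_not_iff.mpr hpr, Bool.eq_not_iff.mpr hrq, Bool.not_not]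
  · rintro ⟨h, h'⟩
    obtain ⟨r, hr, hr'⟩ := exists_isAug_augIndex (!p.isAug) p.augIndex
    exact ⟨r, ⟨by simp [hr], hr'.symm⟩, by simp [hr, h], hr'.trans h'⟩

def oddStep : RelM := fun p q => p.isAug = q.isAug ∧ Odd (q.augIndex - p.augIndex)

lemma UP_sq_mul_U_sq_apply (p q : Triad) :
    ((U * P) ^ 2 * U ^ 2) p q ↔ ∃ r s, U p r ∧ U r.parallel s ∧ (U ^ 2) s.parallel q := by
  rw [sq (U * P), mul_assoc, mul_assoc, mul_assoc]
  simp only [mul_apply U, P_mul_apply, exists_and_left]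

lemma oddStep_of_UP_sq_mul_U_sq {p q : Triad} (h : ((U * P) ^ 2 * U ^ 2) p q) :
    oddStep p q := by
  simp only [UP_sq_mul_U_sq_apply, U_iff, U_sq_apply, isAug_parallel] at h
  obtain ⟨r, s, ⟨hpr, hpr'⟩, ⟨hrs, hrs'⟩, hsq, hsq'⟩ := h
  refine ⟨by rw [Bool.eq_not_iff.mpr hpr, Bool.eq_not_iff.mpr hrs, Bool.not_not, hsq], ?_⟩
  have hsum : q.augIndex - p.augIndex =
      (s.parallel.augIndex - s.augIndex) + (r.parallel.augIndex - r.augIndex) := by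
    rw [← hsq', ← hrs', hpr']; ring
  rw [hsum]
  cases hr : r.isAug
  · have hs : s.isAug := by simpa [hr] using hrs.symm
    rw [augIndex_parallel_of_isAug hs, sub_self, zero_add]
    exact odd_augIndex_parallel_sub hr
  · have hs : s.isAug = false := by simpa [hr] using hrs.symm
    rw [augIndex_parallel_of_isAug hr, sub_self, add_zero]
    exact odd_augIndex_parallel_sub hs

lemma UP_sq_mul_U_sq_of_oddStep {p q : Triad} (h : oddStep p q) :
    ((U * P) ^ 2 * U ^ 2) p q := by
  obtain ⟨h, hd⟩ := h
  simp only [UP_sq_mul_U_sq_apply, U_iff, U_sq_apply, isAug_parallel]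
  cases hp : p.isAug
  · obtain ⟨r, hr, hr'⟩ := exists_isAug_augIndex true p.augIndex
    obtain ⟨s, hs, hs', hs''⟩ := exists_augIndex_parallel_eq_add hd r.parallel.augIndex
    refine ⟨r, s, ⟨by simp [hr], hr'.symm⟩, ⟨by simp [hr, hs], hs'.symm⟩,
      by simp [hs, ← h, hp], ?_⟩
    rw [hs'', augIndex_parallel_of_isAug (by simp [hr]), hr']; ring
  · obtain ⟨r, hr, hr', hr''⟩ := exists_augIndex_parallel_eq_add hd p.augIndex
    obtain ⟨s, hs, hs'⟩ := exists_isAug_augIndex true r.parallel.augIndex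
    refine ⟨r, s, ⟨by simp [hr], hr'.symm⟩, ⟨by simp [hr, hs], hs'.symm⟩,
      by simp [hs, ← h, hp], ?_⟩
    rw [augIndex_parallel_of_isAug (by simp [hs]), hs', hr'']; ring

lemma UP_sq_mul_U_sq : (U * P) ^ 2 * U ^ 2 = oddStep :=
  funext₂ fun _ _ => propext ⟨oddStep_of_UP_sq_mul_U_sq, UP_sq_mul_U_sq_of_oddStep⟩

lemma even_parallel_shift_sub {p q : Triad} (h : p.isAug = q.isAug) :
    Even ((q.parallel.augIndex - q.augIndex) - (p.parallel.augIndex - p.augIndex)) := by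
  cases hp : p.isAug
  · exact (odd_augIndex_parallel_sub (h ▸ hp)).sub_odd (odd_augIndex_parallel_sub hp)
  · rw [augIndex_parallel_of_isAug hp, augIndex_parallel_of_isAug (h ▸ hp), sub_self, sub_self,
      sub_zero]
    exact Even.zero

lemma oddStep_parallel (p q : Triad) : oddStep p.parallel q.parallel ↔ oddStep p q := by
  simp only [oddStep, isAug_parallel]
  refine and_congr_right fun h => ?_
  have hsplit : q.parallel.augIndex - p.parallel.augIndex = (q.augIndex - p.augIndex) +
      ((q.parallel.augIndex - q.augIndex) - (p.parallel.augIndex - p.augIndex)) := by ring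
  rw [hsplit]
  exact ⟨fun hd => by simpa using hd.sub_even (even_parallel_shift_sub h),
    fun hd => hd.add_even (even_parallel_shift_sub h)⟩

/-- `(U·P)²·U² = P·(U·P)²·U²·P` and `U²·(P·U)² = P·U²·(P·U)²·P`. -/
theorem UPsq_relations :
    (U * P) ^ 2 * U ^ 2 = P * (U * P) ^ 2 * U ^ 2 * P ∧
    U ^ 2 * (P * U) ^ 2 = P * U ^ 2 * (P * U) ^ 2 * P := by
  have h : (U * P) ^ 2 * U ^ 2 = P * (U * P) ^ 2 * U ^ 2 * P := by
    rw [mul_assoc P, UP_sq_mul_U_sq, P_mul_mul_P_of_forall oddStep_parallel]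
  refine ⟨h, ?_⟩
  simpa only [flip_mul, flip_sq, flip_U, flip_P, mul_assoc] using congrArg flip h

end CubeDance
end

section
/- For every element (N, ν) of Aut(S), the bijection ν maps the set of four augmented triads {C_aug, G_aug, D_aug, F_aug} onto itself (equivalently, if x ∈ X is an augmented triad then ν(x) is an augmented triad). -/
namespace CubeDance

/-- The compatibility condition defining `Aut(S)`: a pair `(N, ν)` of a monoid automorphism
of `M` and a permutation of `X` such that `p R q` implies `ν(p) N(R) ν(q)` for every
`R ∈ M` and all `p, q ∈ X`. -/
def compat (x : MulAut M × Equiv.Perm Triad) : Prop :=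
  ∀ R : M, ∀ pt q : Triad, (↑R : RelM) pt q → (↑(x.1 R) : RelM) (x.2 pt) (x.2 q)

/-! Every element of `M` is either the graph of an element of the dihedral group generated by
`P` and `L`, which fixes every augmented triad and acts freely on the other 24, or (as soon as `U`
occurs in the word) a relation whose image sets are stable under transposing the major and minor
triads by a major third. The automorphism `N` sends the involution `P` to an involution `≠ 1`;
relations of the second kind never square to `1`, so `N P` is a non-trivial dihedral map. As `P`
fixes each augmented triad, `N P` fixes its image under `ν`, which is therefore augmented. -/

lemma one_apply (p q : Triad) : (1 : RelM) p q ↔ p = q := Iff.rfl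

def graphRel (f : Triad → Triad) : RelM := fun p q => f p = q

lemma graphRel_mul_graphRel (f g : Triad → Triad) :
    graphRel f * graphRel g = graphRel (g ∘ f) := by
  funext p q
  apply propext
  constructor
  · rintro ⟨r, rfl, rfl⟩
    rfl
  · rintro rfl
    exact ⟨f p, rfl, rfl⟩

lemma graphRel_id : graphRel id = 1 := rfl

def majorThirdShift : Triad → Triad
  | .maj x => .maj (x + 4)
  | .min x => .min (x + 4)
  | .aug a => .aug a

def MajorThirdShiftClosed (R : RelM) : Prop := ∀ p q, R p q → R p (majorThirdShift q)

lemma MajorThirdShiftClosed.mul_left {S : RelM} (hS : MajorThirdShiftClosed S) (R : RelM) :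
    MajorThirdShiftClosed (R * S) := by
  rintro p q ⟨r, hpr, hrq⟩
  exact ⟨r, hpr, hS r q hrq⟩

lemma MajorThirdShiftClosed.mul_graphRel {R : RelM} (hR : MajorThirdShiftClosed R)
    {f : Triad → Triad} (hf : ∀ q, f (majorThirdShift q) = majorThirdShift (f q)) :
    MajorThirdShiftClosed (R * graphRel f) := by
  rintro p _ ⟨r, hpr, rfl⟩
  exact ⟨majorThirdShift r, hR p r hpr, hf r⟩

lemma not_majorThirdShiftClosed_one : ¬ MajorThirdShiftClosed 1 := by
  intro h
  have : Triad.maj 0 = Triad.maj 4 := h _ _ rfl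
  exact absurd (Triad.maj.inj this) (by decide)

lemma MajorThirdShiftClosed.mul_self_ne_one {S : RelM} (hS : MajorThirdShiftClosed S) :
    S * S ≠ 1 := fun h =>
    not_majorThirdShiftClosed_one (h ▸ hS.mul_left S)

lemma cast_val_add_four (x : ZMod 12) : (((x + 4).val : ℕ) : ZMod 4) = (x.val : ZMod 4) := by
  revert x
  decide

lemma majorThirdShiftClosed_U : MajorThirdShiftClosed U := by
  rintro (_ | _ | a) (x | x | _) h <;>
    simp only [U, majorThirdShift, cast_val_add_four] at h ⊢ <;> exact h

/-- The elements of the dihedral group of order 24 generated by `P` and `L`. -/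
def dihedral : Bool → ZMod 12 → Triad → Triad
  | false, t, .maj x => .maj (x + t)
  | true, t, .maj x => .min (x + t)
  | false, t, .min x => .min (x - t)
  | true, t, .min x => .maj (x - t)
  | _, _, .aug a => .aug a

lemma dihedral_comp (ε δ : Bool) (t s : ZMod 12) :
    dihedral δ s ∘ dihedral ε t = dihedral (xor ε δ) (t + if ε then -s else s) := by
  funext p
  cases ε <;> cases δ <;> cases p <;>
    simp only [dihedral, Function.comp_apply, Bool.xor_false, Bool.xor_true, Bool.not_true,
      Bool.not_false, Bool.false_eq_true, ↓reduceIte, Triad.maj.injEq, Triad.min.injEq] <;> ring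

lemma dihedral_false_zero : dihedral false 0 = id := by
  funext p
  cases p <;> simp [dihedral]

lemma dihedral_majorThirdShift (ε : Bool) (t : ZMod 12) (q : Triad) :
    dihedral ε t (majorThirdShift q) = majorThirdShift (dihedral ε t q) := by
  cases ε <;> cases q <;>
    simp only [dihedral, majorThirdShift, Triad.maj.injEq, Triad.min.injEq] <;> ring

lemma exists_aug_of_dihedral_apply_self {ε : Bool} {t : ZMod 12} (hne : dihedral ε t ≠ id)
    {q : Triad} (hq : dihedral ε t q = q) : ∃ b, q = .aug b := by
  cases ε <;> cases q <;> simp only [dihedral, reduceCtorEq, Triad.maj.injEq, Triad.min.injEq,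
    add_eq_left, sub_eq_self] at hq
  · exact absurd (hq ▸ dihedral_false_zero) hne
  · exact absurd (hq ▸ dihedral_false_zero) hne
  all_goals exact ⟨_, rfl⟩

lemma P_eq : P = graphRel (dihedral true 0) := by
  funext p q
  cases p <;> cases q <;> simp [P, graphRel, dihedral, eq_comm]

lemma L_eq : L = graphRel (dihedral true 4) := by
  funext p q
  cases p <;> cases q <;> simp [L, graphRel, dihedral, eq_comm, eq_sub_iff_add_eq]

lemma P_mul_P : P * P = 1 := by
  rw [P_eq, graphRel_mul_graphRel, dihedral_comp]
  simp [dihedral_false_zero, graphRel_id]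

lemma P_ne_one : P ≠ 1 := fun h =>
  absurd ((one_apply _ _).mp (h ▸ rfl : (1 : RelM) (.maj 0) (.min 0))) (by simp)

lemma majorThirdShiftClosed_or_eq_dihedral_of_mem {R : RelM} (hR : R ∈ M) :
    MajorThirdShiftClosed R ∨ ∃ ε t, R = graphRel (dihedral ε t) := by
  induction hR using Submonoid.closure_induction with
  | mem R hR =>
    rcases hR with rfl | rfl | rfl
    · exact .inl majorThirdShiftClosed_U
    · exact .inr ⟨true, 0, P_eq⟩
    · exact .inr ⟨true, 4, L_eq⟩
  | one => exact .inr ⟨false, 0, by rw [dihedral_false_zero, graphRel_id]⟩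
  | mul R S _ _ hR hS =>
    rcases hS with hS | ⟨δ, s, rfl⟩
    · exact .inl (hS.mul_left R)
    rcases hR with hR | ⟨ε, t, rfl⟩
    · exact .inl (hR.mul_graphRel (dihedral_majorThirdShift δ s))
    · exact .inr ⟨_, _, by rw [graphRel_mul_graphRel, dihedral_comp]⟩

/-- For every `(N, ν)` in `Aut(S)`, the bijection `ν` maps augmented triads to
augmented triads. -/
theorem autS_maps_aug_to_aug (x : MulAut M × Equiv.Perm Triad) (hx : compat x) :
    ∀ a : ZMod 4, ∃ b : ZMod 4, x.2 (Triad.aug a) = Triad.aug b := by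
  intro a
  set S : M := x.1 ⟨P, P_mem⟩
  have hS_sq : (S : RelM) * S = 1 := by
    have : S * S = 1 := by
      rw [← map_mul, ← map_one x.1]
      exact congrArg x.1 (Subtype.ext P_mul_P)
    exact congrArg Subtype.val this
  have hS_ne : (S : RelM) ≠ 1 := by
    intro h
    have : S = x.1 1 := by rw [map_one]; exact Subtype.ext h
    exact P_ne_one (congrArg Subtype.val (x.1.injective this))
  have hS_fix : (S : RelM) (x.2 (.aug a)) (x.2 (.aug a)) := hx _ _ _ rfl
  rcases majorThirdShiftClosed_or_eq_dihedral_of_mem S.2 with hshift | ⟨ε, t, hS⟩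
  · exact absurd hS_sq hshift.mul_self_ne_one
  · rw [hS] at hS_fix hS_ne
    exact exists_aug_of_dihedral_apply_self (fun h => hS_ne (h ▸ graphRel_id)) hS_fix

end CubeDance
end

section
/- The projection homomorphism from Aut(S) to the automorphism group of M_{U,P,L} sending (N, ν) to N is surjective: every monoid automorphism N of M_{U,P,L} admits a bijection ν of X such that (N, ν) ∈ Aut(S). -/
namespace CubeDance

/-!
Every element of `M` is a relation on the 28 triads, so `M` can be enumerated by computation:
packing a relation into a `28 * 28`-bit natural number turns relational composition into a
few word operations, and iterating multiplication by `U`, `P`, `L` from `1` reaches a list of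
40 relations closed under the generators. An automorphism `N` is determined by the images of
`U`, `P`, `L`, and these satisfy every relation and non-relation that `U`, `P`, `L` satisfy.
Since `P` and `L` must go to distinct involutions `≠ 1`, of which `M` has only `P`, `L` and
`PLP`, a finite check shows that the images are the relabellings of `U`, `P`, `L` along one of
12 explicit permutations `ν` of the triads. Relabelling along `ν` is multiplicative, so `N`
agrees with it on all of `M`, which is the compatibility of `(N, ν)`.
-/

namespace BitMatrix

def bigOr (l : List ℕ) : ℕ := l.foldr (· ||| ·) 0

theorem testBit_bigOr (l : List ℕ) (m : ℕ) :
    (bigOr l).testBit m = true ↔ ∃ a ∈ l, a.testBit m = true := by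
  induction l with
  | nil => simp [bigOr]
  | cons a l ih => simp [bigOr, ← ih]

theorem mod_two_pow_eq_mod_two {n x : ℕ} (hn : 0 < n) (hx : ∀ m, x.testBit m = true → n ∣ m) :
    x % 2 ^ n = x % 2 := by
  refine Nat.eq_of_testBit_eq fun j => ?_
  rw [Nat.testBit_mod_two_pow, ← Nat.pow_one 2, Nat.testBit_mod_two_pow]
  rcases Nat.eq_zero_or_pos j with rfl | hj
  · simp [hn]
  · cases h : x.testBit j
    · simp
    · have := Nat.le_of_dvd hj (hx j h)
      simp only [Bool.and_true, decide_eq_decide]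
      omega

theorem mul_eq_two_pow_mul_add {n x r : ℕ} (hn : 0 < n) (hx : ∀ m, x.testBit m = true → n ∣ m) :
    x * r = 2 ^ n * (x / 2 ^ n * r) + x % 2 * r := by
  rw [← mod_two_pow_eq_mod_two hn hx, ← mul_assoc, ← add_mul, Nat.div_add_mod]

theorem testBit_mul_of_dvd {n x r k : ℕ} (hr : r < 2 ^ n) (hx : ∀ m, x.testBit m = true → n ∣ m)
    (hk : k < n) (i : ℕ) : (x * r).testBit (n * i + k) = (x.testBit (n * i) && r.testBit k) := by
  have hn : 0 < n := hk.trans_le' (Nat.zero_le k)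
  have hlow : ∀ x, x % 2 * r < 2 ^ n := fun x =>
    (mul_le_of_le_one_left (Nat.zero_le r) (Nat.le_of_lt_succ (Nat.mod_lt x two_pos))).trans_lt hr
  induction i generalizing x with
  | zero =>
    rw [mul_eq_two_pow_mul_add hn hx, Nat.testBit_two_pow_mul_add _ (hlow x), if_pos (by simpa),
      Nat.mul_zero, Nat.testBit_zero]
    rcases Nat.mod_two_eq_zero_or_one x with h | h <;> simp [h]
  | succ i ih =>
    have hx' : ∀ m, (x / 2 ^ n).testBit m = true → n ∣ m := fun m h =>
      (Nat.dvd_add_left (dvd_refl n)).1 (hx _ (Nat.testBit_div_two_pow x m ▸ h))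
    rw [mul_eq_two_pow_mul_add hn hx, Nat.mul_add_one, Nat.testBit_two_pow_mul_add _ (hlow x),
      if_neg (by omega), show n * i + n + k - n = n * i + k by omega, ih hx', Nat.testBit_div_two_pow]

def firstColumn (n : ℕ) : ℕ := bigOr ((List.range n).map fun i => 2 ^ (n * i))

theorem testBit_firstColumn (n m : ℕ) :
    (firstColumn n).testBit m = true ↔ ∃ i < n, n * i = m := by
  simp [firstColumn, testBit_bigOr, Nat.testBit_two_pow]

/- Column `j` of `A`, moved to column `0`, times row `j` of `B`: the column has bits only at
multiples of `n` and the row is below `2 ^ n`, so the product copies row `j` of `B` into every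
row `i` with `A i j`, without carries (`testBit_mul_of_dvd`).

`mul` and `ofRel` are irreducible so that elaboration never tries to evaluate them on
`28 * 28`-bit numbers; `decide +kernel` is unaffected. -/
@[irreducible]
def mul (n A B : ℕ) : ℕ :=
  bigOr ((List.range n).map fun j =>
    ((A >>> j) &&& firstColumn n) * ((B >>> (n * j)) % 2 ^ n)) % 2 ^ (n * n)

theorem mul_lt (n A B : ℕ) : mul n A B < 2 ^ (n * n) := by
  rw [mul]
  exact Nat.mod_lt _ (Nat.two_pow_pos _)

theorem index_lt {n i j : ℕ} (hi : i < n) (hj : j < n) : n * i + j < n * n := by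
  nlinarith

theorem testBit_mul {n i k : ℕ} (hi : i < n) (hk : k < n) (A B : ℕ) :
    (mul n A B).testBit (n * i + k) = true ↔
      ∃ j < n, A.testBit (n * i + j) = true ∧ B.testBit (n * j + k) = true := by
  rw [mul, Nat.testBit_mod_two_pow, decide_eq_true (index_lt hi hk), Bool.true_and, testBit_bigOr]
  simp only [List.mem_map, List.mem_range, exists_exists_and_eq_and]
  refine exists_congr fun j => and_congr_right fun hj => ?_
  have hcol : ∀ m, ((A >>> j) &&& firstColumn n).testBit m = true → n ∣ m := fun m h => by
    rw [Nat.testBit_land, Bool.and_eq_true, testBit_firstColumn] at h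
    obtain ⟨i', -, rfl⟩ := h.2
    exact dvd_mul_right n i'
  have hfirst : (firstColumn n).testBit (n * i) = true := (testBit_firstColumn n _).2 ⟨i, hi, rfl⟩
  rw [testBit_mul_of_dvd (Nat.mod_lt _ (Nat.two_pow_pos n)) hcol hk, Nat.testBit_land,
    Nat.testBit_shiftRight, Nat.testBit_mod_two_pow, Nat.testBit_shiftRight, hfirst]
  simp [hk, add_comm j]

variable {α : Type*} {n : ℕ} (e : α ≃ Fin n)

def toRel (A : ℕ) (p q : α) : Prop := A.testBit (n * e p + e q)

instance (A : ℕ) : DecidableRel (toRel e A) := fun _ _ => inferInstanceAs (Decidable (_ = _))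

@[irreducible]
def ofRel (R : α → α → Prop) [DecidableRel R] : ℕ :=
  Nat.ofBits fun k : Fin (n * n) =>
    decide (R (e.symm (finProdFinEquiv.symm k).1) (e.symm (finProdFinEquiv.symm k).2))

theorem ofRel_lt (R : α → α → Prop) [DecidableRel R] : ofRel e R < 2 ^ (n * n) := by
  rw [ofRel]
  exact Nat.ofBits_lt_two_pow _

theorem toRel_ofRel (R : α → α → Prop) [DecidableRel R] : toRel e (ofRel e R) = R := by
  funext p q
  have hpq := index_lt (e p).2 (e q).2
  have hk : finProdFinEquiv.symm ⟨n * e p + e q, hpq⟩ = (e p, e q) :=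
    finProdFinEquiv.symm_apply_eq.2 (Fin.ext (add_comm _ _))
  rw [toRel, ofRel, Nat.testBit_ofBits_lt _ _ hpq, hk]
  simp

theorem toRel_mul_apply (A B : ℕ) (p q : α) :
    toRel e (mul n A B) p q ↔ ∃ r, toRel e A p r ∧ toRel e B r q := by
  rw [toRel, testBit_mul (e p).2 (e q).2]
  exact ⟨fun ⟨j, hj, h⟩ => ⟨e.symm ⟨j, hj⟩, by simpa [toRel] using h⟩,
    fun ⟨r, h⟩ => ⟨e r, (e r).2, h⟩⟩

theorem toRel_injOn {A B : ℕ} (hA : A < 2 ^ (n * n)) (hB : B < 2 ^ (n * n))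
    (h : toRel e A = toRel e B) : A = B := by
  refine Nat.eq_of_testBit_eq fun m => ?_
  by_cases hm : m < n * n
  · have hn : 0 < n := Nat.pos_of_mul_pos_left (hm.trans_le' (Nat.zero_le m))
    have := congrFun (congrFun h (e.symm ⟨m / n, Nat.div_lt_of_lt_mul hm⟩))
      (e.symm ⟨m % n, Nat.mod_lt m hn⟩)
    simpa [toRel, Nat.div_add_mod] using this
  · have hle : 2 ^ (n * n) ≤ 2 ^ m := Nat.pow_le_pow_right two_pos (not_lt.1 hm)
    rw [Nat.testBit_lt_two_pow (hA.trans_le hle), Nat.testBit_lt_two_pow (hB.trans_le hle)]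

end BitMatrix

section Monoid

variable {G : Type*} [Monoid G]

def closureStep [DecidableEq G] (gens S : List G) : List G :=
  (gens.flatMap fun g => S.map (g * ·)) ∪ S

theorem mem_of_mem_closure_of_closureStep_eq [DecidableEq G] {gens S : List G}
    (h1 : 1 ∈ S) (hS : closureStep gens S = S) {x : G}
    (hx : x ∈ Submonoid.closure {g | g ∈ gens}) : x ∈ S := by
  induction hx using Submonoid.closure_induction_left with
  | one => exact h1
  | mul_left g hg y _ hy =>
    rw [← hS, closureStep, List.mem_union_iff, List.mem_flatMap]
    exact Or.inl ⟨g, hg, List.mem_map_of_mem hy⟩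

/- Relations and non-relations of `(U, P, L)` found by a computer search: together they leave
for `(N U, N P, N L)` only the 12 relabellings of `(U, P, L)`. -/
def UPLRelations (u p l : G) : Prop :=
  (p * p = 1 ∧ p ≠ 1) ∧ (l * l = 1 ∧ l ≠ 1) ∧ p ≠ l ∧
    u * u * u = u ∧ u * u ≠ 1 ∧ u * l * u * p ≠ l * u * p * u

instance [DecidableEq G] (u p l : G) : Decidable (UPLRelations u p l) := by
  dsimp only [UPLRelations]; infer_instance

theorem uplRelations_map_iff {H : Type*} [Monoid H] (f : G →* H) (hf : Function.Injective f)
    {u p l : G} : UPLRelations (f u) (f p) (f l) ↔ UPLRelations u p l := by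
  simp only [UPLRelations, ne_eq, ← map_mul, ← map_one f, hf.eq_iff]

end Monoid

def Triad.equivSum : Triad ≃ (ZMod 12 ⊕ ZMod 12) ⊕ ZMod 4 where
  toFun
    | .maj x => .inl (.inl x)
    | .min x => .inl (.inr x)
    | .aug a => .inr a
  invFun
    | .inl (.inl x) => .maj x
    | .inl (.inr x) => .min x
    | .inr a => .aug a
  left_inv t := by cases t <;> rfl
  right_inv s := by rcases s with (x | x) | a <;> rfl

def Triad.equivFin : Triad ≃ Fin 28 :=
  Triad.equivSum.trans ((Equiv.sumCongr finSumFinEquiv (Equiv.refl _)).trans finSumFinEquiv)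

instance : DecidableRel U := fun p q => by cases p <;> cases q <;> dsimp only [U] <;> infer_instance

instance : DecidableRel P := fun p q => by cases p <;> cases q <;> dsimp only [P] <;> infer_instance

instance : DecidableRel L := fun p q => by cases p <;> cases q <;> dsimp only [L] <;> infer_instance

def relabel (ν : Equiv.Perm Triad) (R : RelM) : RelM := fun p q => R (ν.symm p) (ν.symm q)

instance (ν : Equiv.Perm Triad) (R : RelM) [DecidableRel R] : DecidableRel (relabel ν R) :=
  fun p q => ‹DecidableRel R› (ν.symm p) (ν.symm q)

theorem relabel_one (ν : Equiv.Perm Triad) : relabel ν 1 = 1 :=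
  funext₂ fun _ _ => propext ν.symm.injective.eq_iff

theorem relabel_mul (ν : Equiv.Perm Triad) (R S : RelM) :
    relabel ν (R * S) = relabel ν R * relabel ν S := by
  funext p q
  refine propext ⟨fun ⟨r, hpr, hrq⟩ => ⟨ν r, ?_, ?_⟩, fun ⟨r, hpr, hrq⟩ => ⟨ν.symm r, hpr, hrq⟩⟩ <;>
    simpa [relabel]

theorem compat_of_generators (N : MulAut M) (ν : Equiv.Perm Triad)
    (hU : (N ⟨U, U_mem⟩ : RelM) = relabel ν U) (hP : (N ⟨P, P_mem⟩ : RelM) = relabel ν P)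
    (hL : (N ⟨L, L_mem⟩ : RelM) = relabel ν L) : compat (N, ν) := by
  have hN : ∀ R : M, (N R : RelM) = relabel ν R := by
    rintro ⟨R, hR⟩
    induction hR using Submonoid.closure_induction with
    | mem R hR =>
      rcases hR with rfl | rfl | rfl
      exacts [hU, hP, hL]
    | one => rw [relabel_one]; exact congrArg Subtype.val (map_one N)
    | mul R S hR hS ihR ihS =>
      rw [relabel_mul, ← ihR, ← ihS]
      exact congrArg Subtype.val (map_mul N ⟨R, hR⟩ ⟨S, hS⟩)
  intro R p q h
  rw [hN]
  simpa [relabel] using h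

def Triad.parallel_s19 : Triad → Triad
  | .maj x => .min x
  | .min x => .maj x
  | .aug a => .aug a

def Triad.leadingTone : Triad → Triad
  | .maj x => .min (x + 4)
  | .min x => .maj (x - 4)
  | .aug a => .aug a

def Triad.twist : Triad → Triad
  | .maj x => .maj (5 * x)
  | .min x => .min (5 * x + 4)
  | .aug a => .aug a

def parallelPerm : Equiv.Perm Triad :=
  Function.Involutive.toPerm Triad.parallel_s19 (by rintro (x | x | a) <;> rfl)

def leadingTonePerm : Equiv.Perm Triad :=
  Function.Involutive.toPerm Triad.leadingTone (by
    rintro (x | x | a) <;> simp [Triad.leadingTone])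

def twistPerm : Equiv.Perm Triad :=
  Function.Involutive.toPerm Triad.twist (by
    rintro (x | x | a) <;> simp only [Triad.twist, Triad.maj.injEq, Triad.min.injEq] <;>
      revert x <;> decide)

/- `parallelPerm` and `leadingTonePerm` are the permutations whose graphs are `P` and `L`;
relabelling along the group `S₃` they generate is conjugation by the units of `M`.
`twistPerm` fixes `U` and swaps `P` and `L`. -/
def symmetries : List (Equiv.Perm Triad) :=
  [1, parallelPerm, leadingTonePerm, parallelPerm * leadingTonePerm,
    leadingTonePerm * parallelPerm, parallelPerm * leadingTonePerm * parallelPerm].flatMap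
    fun g => [g, g * twistPerm]

def RelMat : Type := {A : ℕ // A < 2 ^ (28 * 28)}

namespace RelMat

instance : DecidableEq RelMat := inferInstanceAs (DecidableEq (Subtype _))

def toRel (A : RelMat) : RelM := BitMatrix.toRel Triad.equivFin A.1

instance (A : RelMat) : DecidableRel A.toRel := BitMatrix.instDecidableRelToRel Triad.equivFin A.1

theorem toRel_injective : Function.Injective toRel := fun A B h =>
  Subtype.ext (BitMatrix.toRel_injOn Triad.equivFin A.2 B.2 h)

def ofRel (R : RelM) [DecidableRel R] : RelMat :=
  ⟨BitMatrix.ofRel Triad.equivFin R, BitMatrix.ofRel_lt Triad.equivFin R⟩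

theorem toRel_ofRel (R : RelM) [DecidableRel R] : (ofRel R).toRel = R :=
  BitMatrix.toRel_ofRel Triad.equivFin R

instance : One RelMat := ⟨ofRel (· = ·)⟩

instance : Mul RelMat := ⟨fun A B => ⟨BitMatrix.mul 28 A.1 B.1, BitMatrix.mul_lt 28 A.1 B.1⟩⟩

instance : Pow RelMat ℕ := ⟨fun A k => npowRec k A⟩

theorem toRel_one : (1 : RelMat).toRel = 1 := toRel_ofRel (· = ·)

theorem toRel_mul (A B : RelMat) : (A * B).toRel = A.toRel * B.toRel :=
  funext₂ fun p q => propext (BitMatrix.toRel_mul_apply Triad.equivFin A.1 B.1 p q)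

theorem toRel_pow (A : RelMat) (k : ℕ) : (A ^ k).toRel = A.toRel ^ k := by
  induction k with
  | zero => exact toRel_one
  | succ k ih => rw [pow_succ, ← ih, ← toRel_mul]; rfl

instance : Monoid RelMat :=
  toRel_injective.monoid toRel toRel_one toRel_mul toRel_pow

def toRelHom : RelMat →* RelM where
  toFun := toRel
  map_one' := toRel_one
  map_mul' := toRel_mul

@[simp]
theorem toRelHom_ofRel (R : RelM) [DecidableRel R] : toRelHom (ofRel R) = R := toRel_ofRel R

def relabel (ν : Equiv.Perm Triad) (A : RelMat) : RelMat := ofRel (CubeDance.relabel ν A.toRel)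

theorem toRelHom_relabel (ν : Equiv.Perm Triad) (A : RelMat) :
    toRelHom (relabel ν A) = CubeDance.relabel ν (toRelHom A) :=
  toRel_ofRel _

def u : RelMat := ofRel U

def p : RelMat := ofRel P

def l : RelMat := ofRel L

/- Every element of `M` is a word of length at most 8 in `U`, `P`, `L`;
`closureStep_elements` certifies that nothing is missing. -/
def elements : List RelMat := (closureStep [u, p, l])^[8] [1]

theorem closureStep_elements : closureStep [u, p, l] elements = elements := by
  decide +kernel

theorem one_mem_elements : 1 ∈ elements := by
  decide +kernel

theorem exists_mem_elements (x : M) : ∃ A ∈ elements, toRelHom A = x := by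
  have hgens : toRelHom '' {g | g ∈ [u, p, l]} = {U, P, L} := by
    rw [show {g | g ∈ [u, p, l]} = {u, p, l} by ext; simp]
    simp [Set.image_insert_eq, u, p, l]
  obtain ⟨A, hA, hAx⟩ : (x : RelM) ∈ (Submonoid.closure {g | g ∈ [u, p, l]}).map toRelHom := by
    rw [MonoidHom.map_mclosure, hgens]
    exact x.2
  exact ⟨A, mem_of_mem_closure_of_closureStep_eq one_mem_elements closureStep_elements hA, hAx⟩

def involutions : List RelMat := [p, l, p * l * p]

theorem mem_involutions : ∀ A ∈ elements, A * A = 1 ∧ A ≠ 1 → A ∈ involutions := by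
  decide +kernel

theorem exists_relabel_eq : ∀ bp ∈ involutions, ∀ bl ∈ involutions, ∀ bu ∈ elements,
    UPLRelations bu bp bl →
      ∃ ν ∈ symmetries, relabel ν u = bu ∧ relabel ν p = bp ∧ relabel ν l = bl := by
  decide +kernel

end RelMat

theorem uplRelations_of_images (N : MulAut M) {bu bp bl : RelMat}
    (hu : RelMat.toRelHom bu = N ⟨U, U_mem⟩) (hp : RelMat.toRelHom bp = N ⟨P, P_mem⟩)
    (hl : RelMat.toRelHom bl = N ⟨L, L_mem⟩) : UPLRelations bu bp bl := by
  have hgen : UPLRelations RelMat.u RelMat.p RelMat.l := by decide +kernel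
  have hUPL : UPLRelations U P L := by
    simpa [RelMat.u, RelMat.p, RelMat.l] using
      (uplRelations_map_iff RelMat.toRelHom RelMat.toRel_injective).2 hgen
  have hM := (uplRelations_map_iff M.subtype Subtype.val_injective
    (u := ⟨U, U_mem⟩) (p := ⟨P, P_mem⟩) (l := ⟨L, L_mem⟩)).1 hUPL
  rw [← uplRelations_map_iff RelMat.toRelHom RelMat.toRel_injective, hu, hp, hl]
  exact (uplRelations_map_iff (M.subtype.comp N.toMonoidHom)
    (Subtype.val_injective.comp N.injective)).2 hM

/-- Every monoid automorphism `N` of `M_{U,P,L}` admits a bijection `ν` of `X` such that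
`(N, ν) ∈ Aut(S)`: the projection `Aut(S) → Aut(M)` is surjective. -/
theorem autS_projection_surjective (N : MulAut M) :
    ∃ v : Equiv.Perm Triad, compat (N, v) := by
  obtain ⟨bu, hbu, hu⟩ := RelMat.exists_mem_elements (N ⟨U, U_mem⟩)
  obtain ⟨bp, hbp, hp⟩ := RelMat.exists_mem_elements (N ⟨P, P_mem⟩)
  obtain ⟨bl, hbl, hl⟩ := RelMat.exists_mem_elements (N ⟨L, L_mem⟩)
  have h := uplRelations_of_images N hu hp hl
  obtain ⟨ν, -, rfl, rfl, rfl⟩ := RelMat.exists_relabel_eq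
    bp (RelMat.mem_involutions bp hbp h.1) bl (RelMat.mem_involutions bl hbl h.2.1) bu hbu h
  refine ⟨ν, compat_of_generators N ν ?_ ?_ ?_⟩
  · rw [← hu, RelMat.toRelHom_relabel, RelMat.u, RelMat.toRelHom_ofRel]
  · rw [← hp, RelMat.toRelHom_relabel, RelMat.p, RelMat.toRelHom_ofRel]
  · rw [← hl, RelMat.toRelHom_relabel, RelMat.l, RelMat.toRelHom_ofRel]

end CubeDance
end
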